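/- arXiv:1208.5280 — 2 statements merged into one kernel-verified Lean document; each statement's English description precedes it below -/
import Mathlib

section
/- Let N = 2^n and I ⊆ {1,...,N}. Then ∑_{r=1}^{N} C(w_r, I) = |I|², where C(w_r, I) = ∫_0^1 w_r(x) |∑_{k∈I} w_k(x)|² dx. -/
/-!
Expanding `∏_{k<n} (1 + r_k)` along the binary digits of the monomials gives
`∑_{r ≤ 2^n} w_r = ∏_{k<n} (1 + r_k)`. On `(0, 2^{-n})` every `r_k` with `k < n` is `1`, so this
kernel equals `2^n` there and each `w_k` with `k ≤ 2^n` is `1`, whence `|∑_{k∈I} w_k|² = |I|²`;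
on `[2^{-n}, 1)` some `r_k` with `k < n` is `-1` and the kernel vanishes. The integral is
therefore `2^n · |I|² · 2^{-n}`.
-/

open MeasureTheory Finset

/-- Rademacher functions `r_k(t) = sign (sin (2π 2^k t))` with `sign 0 := -1`. -/
noncomputable def rademacher (k : ℕ) (t : ℝ) : ℝ :=
  if 0 < Real.sin (2 * Real.pi * 2 ^ k * t) then 1 else -1

/-- Walsh functions (original Walsh ordering, indexed from `1`):
`w_1 = 1` and `w_{2^k+m} = r_k · w_m` for `1 ≤ m ≤ 2^k`; equivalently `w_n` is the
product of the Rademacher functions selected by the binary digits of `n - 1`. -/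
noncomputable def walsh (n : ℕ) (t : ℝ) : ℝ :=
  ∏ k ∈ Finset.range n, if (n - 1).testBit k then rademacher k t else 1

section BinaryProducts

variable {M : Type*}

theorem prod_range_testBit_eq_of_lt_two_pow [CommMonoid M] (f : ℕ → M) {m n p : ℕ}
    (hm : m < 2 ^ n) (hnp : n ≤ p) :
    ∏ k ∈ range p, (if m.testBit k then f k else 1)
      = ∏ k ∈ range n, (if m.testBit k then f k else 1) := by
  refine (prod_subset (range_subset_range.mpr hnp) fun k _ hk => ?_).symm
  have hmk : m < 2 ^ k := hm.trans_le (Nat.pow_le_pow_right two_pos (by simpa using hk))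
  simp [Nat.testBit_eq_false_of_lt hmk]

theorem sum_range_two_pow_prod_testBit [CommSemiring M] (f : ℕ → M) (n : ℕ) :
    ∑ m ∈ range (2 ^ n), ∏ k ∈ range n, (if m.testBit k then f k else 1)
      = ∏ k ∈ range n, (1 + f k) := by
  induction n with
  | zero => simp
  | succ n ih =>
    have low : ∀ m ∈ range (2 ^ n),
        ∏ k ∈ range (n + 1), (if m.testBit k then f k else 1)
          = ∏ k ∈ range n, (if m.testBit k then f k else 1) := fun m hm =>
      prod_range_testBit_eq_of_lt_two_pow f (mem_range.mp hm) n.le_succ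
    have high : ∀ m ∈ range (2 ^ n),
        ∏ k ∈ range (n + 1), (if (2 ^ n + m).testBit k then f k else 1)
          = (∏ k ∈ range n, (if m.testBit k then f k else 1)) * f n := by
      intro m hm
      rw [prod_range_succ, Nat.testBit_two_pow_add_eq,
        Nat.testBit_eq_false_of_lt (mem_range.mp hm)]
      congr 1
      exact prod_congr rfl fun k hk => by rw [Nat.testBit_two_pow_add_gt (mem_range.mp hk)]
    rw [pow_succ, mul_two, sum_range_add, sum_congr rfl low, sum_congr rfl high, ← sum_mul, ih,
      prod_range_succ]
    ring

end BinaryProducts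

section Rademacher

theorem rademacher_eq_one_or_eq_neg_one (k : ℕ) (t : ℝ) :
    rademacher k t = 1 ∨ rademacher k t = -1 := by
  unfold rademacher; split <;> simp

@[fun_prop]
theorem measurable_rademacher (k : ℕ) : Measurable (rademacher k) :=
  Measurable.ite (measurableSet_lt measurable_const (by fun_prop)) measurable_const
    measurable_const

theorem rademacher_eq_one {k : ℕ} {t : ℝ} (h₀ : 0 < 2 ^ k * t) (h₁ : 2 ^ k * t < 1 / 2) :
    rademacher k t = 1 := by
  rw [rademacher, if_pos]
  apply Real.sin_pos_of_pos_of_lt_pi <;> nlinarith [Real.pi_pos]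

theorem rademacher_eq_neg_one {k : ℕ} {t : ℝ} (h₀ : 1 / 2 ≤ 2 ^ k * t) (h₁ : 2 ^ k * t ≤ 1) :
    rademacher k t = -1 := by
  rw [rademacher, if_neg (not_lt.mpr ?_)]
  rw [← Real.sin_sub_two_pi]
  apply Real.sin_nonpos_of_nonpos_of_neg_pi_le <;> nlinarith [Real.pi_pos]

theorem rademacher_eq_one_of_lt {n k : ℕ} {t : ℝ} (hk : k < n) (h₀ : 0 < t)
    (h₁ : t < ((2 : ℝ) ^ n)⁻¹) : rademacher k t = 1 := by
  have hkn : (2 : ℝ) ^ k * 2 ≤ 2 ^ n := by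
    rw [← pow_succ]; exact pow_le_pow_right₀ one_le_two hk
  have : (2 : ℝ) ^ n * t < 1 := (lt_inv_mul_iff₀ (by positivity)).1 (by rwa [mul_one])
  apply rademacher_eq_one (by positivity)
  nlinarith

theorem exists_two_pow_mul_mem_Ico {n : ℕ} {t : ℝ} (h₀ : ((2 : ℝ) ^ n)⁻¹ ≤ t) (h₁ : t < 1) :
    ∃ k < n, 1 / 2 ≤ 2 ^ k * t ∧ 2 ^ k * t < 1 := by
  induction n with
  | zero => simp at h₀; linarith
  | succ n ih =>
    by_cases h : ((2 : ℝ) ^ n)⁻¹ ≤ t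
    · obtain ⟨k, hk, hk'⟩ := ih h
      exact ⟨k, hk.trans n.lt_succ_self, hk'⟩
    · refine ⟨n, n.lt_succ_self, ?_, ?_⟩
      · rw [pow_succ, inv_le_iff_one_le_mul₀' (by positivity)] at h₀
        linarith
      · exact (lt_inv_mul_iff₀ (by positivity)).1 (by rwa [mul_one, ← not_le])

theorem exists_rademacher_eq_neg_one {n : ℕ} {t : ℝ} (h₀ : ((2 : ℝ) ^ n)⁻¹ ≤ t) (h₁ : t < 1) :
    ∃ k < n, rademacher k t = -1 := by
  obtain ⟨k, hk, hlo, hhi⟩ := exists_two_pow_mul_mem_Ico h₀ h₁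
  exact ⟨k, hk, rademacher_eq_neg_one hlo hhi.le⟩

end Rademacher

section Walsh

@[fun_prop]
theorem measurable_walsh (r : ℕ) : Measurable (walsh r) :=
  Finset.measurable_prod _ fun k _ => by
    split
    · exact measurable_rademacher k
    · exact measurable_const

theorem abs_walsh (r : ℕ) (t : ℝ) : |walsh r t| = 1 := by
  rw [walsh, abs_prod]
  refine prod_eq_one fun k _ => ?_
  split
  · rcases rademacher_eq_one_or_eq_neg_one k t with h | h <;> simp [h]
  · exact abs_one

theorem walsh_eq_prod_range {n r : ℕ} (hr : r ≤ 2 ^ n) (t : ℝ) :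
    walsh r t = ∏ k ∈ range n, if (r - 1).testBit k then rademacher k t else 1 := by
  have hn : r - 1 < 2 ^ n := by have := Nat.two_pow_pos n; omega
  have hr' : r - 1 < 2 ^ r := (r.sub_le 1).trans_lt r.lt_two_pow_self
  rw [walsh, ← prod_range_testBit_eq_of_lt_two_pow _ hr' (le_max_left r n),
    prod_range_testBit_eq_of_lt_two_pow _ hn (le_max_right r n)]

theorem sum_walsh_eq_prod (n : ℕ) (t : ℝ) :
    ∑ r ∈ Icc 1 (2 ^ n), walsh r t = ∏ k ∈ range n, (1 + rademacher k t) := by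
  rw [← sum_range_two_pow_prod_testBit, ← Finset.Ico_add_one_right_eq_Icc, sum_Ico_eq_sum_range]
  refine sum_congr (by simp) fun m hm => ?_
  rw [walsh_eq_prod_range (n := n) (by simp at hm; omega), Nat.add_sub_cancel_left]

theorem walsh_eq_one {n r : ℕ} (hr : r ≤ 2 ^ n) {t : ℝ} (h₀ : 0 < t)
    (h₁ : t < ((2 : ℝ) ^ n)⁻¹) : walsh r t = 1 := by
  refine prod_eq_one fun k _ => ?_
  split
  case isTrue hk =>
    have : 2 ^ k < 2 ^ n :=
      (Nat.ge_two_pow_of_testBit hk).trans_lt (by have := Nat.two_pow_pos n; omega)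
    exact rademacher_eq_one_of_lt ((Nat.pow_lt_pow_iff_right one_lt_two).1 this) h₀ h₁
  case isFalse => rfl

theorem sum_walsh_eqOn_indicator (n : ℕ) :
    Set.EqOn (fun t => ∑ r ∈ Icc 1 (2 ^ n), walsh r t)
      ((Set.Ioo 0 ((2 : ℝ) ^ n)⁻¹).indicator fun _ => 2 ^ n) (Set.Ioo 0 1) := by
  intro t ht
  obtain ⟨h₀, h₁⟩ := ht
  simp only [sum_walsh_eq_prod]
  by_cases hsmall : t < ((2 : ℝ) ^ n)⁻¹
  · rw [Set.indicator_of_mem (Set.mem_Ioo.2 ⟨h₀, hsmall⟩),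
      prod_congr rfl fun k hk => by rw [rademacher_eq_one_of_lt (mem_range.1 hk) h₀ hsmall]]
    norm_num
  · obtain ⟨k, hk, hk'⟩ := exists_rademacher_eq_neg_one (not_lt.1 hsmall) h₁
    rw [Set.indicator_of_notMem fun h => hsmall h.2,
      prod_eq_zero (mem_range.2 hk) (by rw [hk']; ring)]

theorem integrable_walsh_mul_sum_sq {μ : Measure ℝ} [IsFiniteMeasure μ] (r : ℕ)
    (I : Finset ℕ) : Integrable (fun t => walsh r t * (∑ k ∈ I, walsh k t) ^ 2) μ := by
  refine .of_bound (by fun_prop) ((#I : ℝ) ^ 2) (ae_of_all _ fun t => ?_)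
  have hsum : |∑ k ∈ I, walsh k t| ≤ #I := by
    simpa [abs_walsh] using abs_sum_le_sum_abs (fun k => walsh k t) I
  rw [Real.norm_eq_abs, abs_mul, abs_walsh, one_mul, abs_pow]
  gcongr

end Walsh

/-- For `N = 2^n` and `I ⊆ {1,…,N}`, the correlations sum to `|I|²`:
`∑_{r=1}^{N} C(w_r, I) = |I|²`. -/
theorem stmt12 (n : ℕ) (I : Finset ℕ) (hI : I ⊆ Finset.Icc 1 (2 ^ n)) :
    ∑ r ∈ Finset.Icc 1 (2 ^ n),
        ∫ x in Set.Icc (0:ℝ) 1, walsh r x * (∑ k ∈ I, walsh k x) ^ 2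
      = (I.card : ℝ) ^ 2 := by
  have hε : ((2 : ℝ) ^ n)⁻¹ ≤ 1 := inv_le_one_of_one_le₀ (one_le_pow₀ one_le_two)
  have hkernel : Set.EqOn (fun x => (∑ r ∈ Icc 1 (2 ^ n), walsh r x) * (∑ k ∈ I, walsh k x) ^ 2)
      ((Set.Ioo 0 ((2 : ℝ) ^ n)⁻¹).indicator fun _ => 2 ^ n * (#I : ℝ) ^ 2) (Set.Ioo 0 1) := by
    intro x hx
    simp only [sum_walsh_eqOn_indicator n hx]
    by_cases h : x ∈ Set.Ioo 0 ((2 : ℝ) ^ n)⁻¹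
    · rw [Set.indicator_of_mem h, Set.indicator_of_mem h,
        sum_congr rfl fun k hk => walsh_eq_one (mem_Icc.1 (hI hk)).2 h.1 h.2]
      simp
    · simp [Set.indicator_of_notMem h]
  calc _ = ∫ x in Set.Icc (0 : ℝ) 1,
        (∑ r ∈ Icc 1 (2 ^ n), walsh r x) * (∑ k ∈ I, walsh k x) ^ 2 := by
        simp_rw [sum_mul]
        exact (integral_finsetSum _ fun r _ => integrable_walsh_mul_sum_sq r I).symm
    _ = ∫ x in Set.Ioo (0 : ℝ) 1,
        (∑ r ∈ Icc 1 (2 ^ n), walsh r x) * (∑ k ∈ I, walsh k x) ^ 2 :=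
        (setIntegral_congr_set Ioo_ae_eq_Icc).symm
    _ = 2 ^ n * (#I : ℝ) ^ 2 * ((2 : ℝ) ^ n)⁻¹ := by
        rw [setIntegral_congr_fun measurableSet_Ioo hkernel,
          setIntegral_indicator measurableSet_Ioo,
          Set.inter_eq_right.2 (Set.Ioo_subset_Ioo_right hε), setIntegral_const,
          Real.volume_real_Ioo_of_le (by positivity), smul_eq_mul, sub_zero, mul_comm]
    _ = (#I : ℝ) ^ 2 := by field_simp
end

section
/- Let B₁ be the L¹–L² Khintchine constant. In dimension 2^k, for every vector a ∈ ℂ^{2^k} supported on the set D = {1, 2, 4, ..., 2^{k-1}} of powers of two (indices of the Rademacher columns inside the Hadamard matrix), one has ‖a‖_{ℓ²_{2^k}} ≤ (B₁/√(2^k)) ‖H_{2^k} a‖_{ℓ¹_{2^k}}. -/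
/-!
The Hadamard matrix is orthogonal, so `∑ ‖(H a)ᵢ‖² = ∑ ‖aⱼ‖²`. For `a` supported on the
Rademacher columns `2^l`, the block recursion splits `a` into its first half (again supported on
Rademacher columns) and the single coordinate `c` at index `2^k`, whose image is the constant
vector `2^{-k/2} c`. The inequality `‖x+y‖⁴ + ‖x-y‖⁴ ≤ 2‖x‖⁴ + 12‖x‖²‖y‖² + 2‖y‖⁴` then carries
Khintchine's fourth-moment bound `∑ ‖(H a)ᵢ‖⁴ ≤ 3·2^{-k} (∑ ‖aⱼ‖²)²` through the induction, and
Littlewood's interpolation `(∑ s²)³ ≤ (∑ s)² ∑ s⁴` turns it into the `L¹` bound with `B₁ = √3`.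
-/

/-- The normalized Hadamard matrices, defined inductively by `H_1 = [1]` and
`H_{2^{k+1}} = 2^{-1/2} [[H, H],[H, −H]]`. -/
noncomputable def hadamard : (k : ℕ) → Matrix (Fin (2 ^ k)) (Fin (2 ^ k)) ℝ
  | 0 => Matrix.of fun _ _ => 1
  | k + 1 =>
    Matrix.reindex (finSumFinEquiv.trans (finCongr (by rw [pow_succ]; ring)))
      (finSumFinEquiv.trans (finCongr (by rw [pow_succ]; ring)))
      ((Real.sqrt 2)⁻¹ •
        Matrix.fromBlocks (hadamard k) (hadamard k) (hadamard k) (-(hadamard k)))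

open Finset

section Moments

variable {ι : Type*} (s : Finset ι) {f : ι → ℝ}

lemma sum_sq_pow_three_le_sq_sum_mul_sum_pow_four (hf : ∀ i ∈ s, 0 ≤ f i) :
    (∑ i ∈ s, f i ^ 2) ^ 3 ≤ (∑ i ∈ s, f i) ^ 2 * ∑ i ∈ s, f i ^ 4 := by
  have h₁ : (∑ i ∈ s, f i ^ 2) ^ 2 ≤ (∑ i ∈ s, f i) * ∑ i ∈ s, f i ^ 3 :=
    sum_sq_le_sum_mul_sum_of_sq_le_mul s hf (fun i hi => pow_nonneg (hf i hi) 3)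
      (fun i _ => le_of_eq (by ring))
  have h₂ : (∑ i ∈ s, f i ^ 3) ^ 2 ≤ (∑ i ∈ s, f i ^ 2) * ∑ i ∈ s, f i ^ 4 :=
    sum_sq_le_sum_mul_sum_of_sq_le_mul s (fun i _ => sq_nonneg (f i))
      (fun i hi => pow_nonneg (hf i hi) 4) (fun i _ => le_of_eq (by ring))
  have hm₂ : 0 ≤ ∑ i ∈ s, f i ^ 2 := sum_nonneg fun i _ => sq_nonneg (f i)
  rcases hm₂.eq_or_lt with h₀ | hpos
  · rw [← h₀, zero_pow three_ne_zero]; positivity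
  refine le_of_mul_le_mul_left ?_ hpos
  calc (∑ i ∈ s, f i ^ 2) * (∑ i ∈ s, f i ^ 2) ^ 3 = ((∑ i ∈ s, f i ^ 2) ^ 2) ^ 2 := by ring
    _ ≤ ((∑ i ∈ s, f i) * ∑ i ∈ s, f i ^ 3) ^ 2 := pow_le_pow_left₀ (by positivity) h₁ 2
    _ = (∑ i ∈ s, f i) ^ 2 * (∑ i ∈ s, f i ^ 3) ^ 2 := by ring
    _ ≤ (∑ i ∈ s, f i) ^ 2 * ((∑ i ∈ s, f i ^ 2) * ∑ i ∈ s, f i ^ 4) := by gcongr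
    _ = _ := by ring

lemma sum_sq_le_of_sum_pow_four_le {C : ℝ} (hC : 0 ≤ C) (hf : ∀ i ∈ s, 0 ≤ f i)
    (h : ∑ i ∈ s, f i ^ 4 ≤ C * (∑ i ∈ s, f i ^ 2) ^ 2) :
    ∑ i ∈ s, f i ^ 2 ≤ C * (∑ i ∈ s, f i) ^ 2 := by
  have hm₂ : 0 ≤ ∑ i ∈ s, f i ^ 2 := sum_nonneg fun i _ => sq_nonneg (f i)
  rcases hm₂.eq_or_lt with h₀ | hpos
  · rw [← h₀]; positivity
  refine le_of_mul_le_mul_right ?_ (pow_pos hpos 2)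
  calc (∑ i ∈ s, f i ^ 2) * (∑ i ∈ s, f i ^ 2) ^ 2 = (∑ i ∈ s, f i ^ 2) ^ 3 := by ring
    _ ≤ (∑ i ∈ s, f i) ^ 2 * ∑ i ∈ s, f i ^ 4 := sum_sq_pow_three_le_sq_sum_mul_sum_pow_four s hf
    _ ≤ (∑ i ∈ s, f i) ^ 2 * (C * (∑ i ∈ s, f i ^ 2) ^ 2) := by gcongr
    _ = _ := by ring

end Moments

section InnerProduct

variable {E : Type*} [NormedAddCommGroup E] [InnerProductSpace ℝ E]

lemma norm_add_pow_four_add_norm_sub_pow_four_le (x y : E) :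
    ‖x + y‖ ^ 4 + ‖x - y‖ ^ 4 ≤ 2 * ‖x‖ ^ 4 + 12 * ‖x‖ ^ 2 * ‖y‖ ^ 2 + 2 * ‖y‖ ^ 4 := by
  have h := abs_real_inner_le_norm x y
  have h4 : ∀ z : E, ‖z‖ ^ 4 = (‖z‖ ^ 2) ^ 2 := fun z => by ring
  rw [h4, h4, norm_add_sq_real, norm_sub_sq_real]
  nlinarith [abs_nonneg (inner ℝ x y), sq_abs (inner ℝ x y), norm_nonneg x, norm_nonneg y]

lemma norm_inv_sqrt_two_smul (x : E) : ‖(Real.sqrt 2)⁻¹ • x‖ = ‖x‖ / Real.sqrt 2 := by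
  rw [norm_smul, norm_inv, Real.norm_of_nonneg (Real.sqrt_nonneg 2), inv_mul_eq_div]

end InnerProduct

noncomputable def finTwoPowSuccEquiv (k : ℕ) : Fin (2 ^ k) ⊕ Fin (2 ^ k) ≃ Fin (2 ^ (k + 1)) :=
  finSumFinEquiv.trans (finCongr (by rw [pow_succ]; ring))

namespace finTwoPowSuccEquiv

variable {k : ℕ}

@[simp] lemma val_inl (j : Fin (2 ^ k)) : (finTwoPowSuccEquiv k (.inl j) : ℕ) = j := by
  simp [finTwoPowSuccEquiv]

@[simp] lemma val_inr (j : Fin (2 ^ k)) : (finTwoPowSuccEquiv k (.inr j) : ℕ) = 2 ^ k + j := by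
  simp [finTwoPowSuccEquiv, add_comm]

lemma sum_eq {M : Type*} [AddCommMonoid M] (f : Fin (2 ^ (k + 1)) → M) :
    ∑ j, f j = ∑ j, f (finTwoPowSuccEquiv k (.inl j)) + ∑ j, f (finTwoPowSuccEquiv k (.inr j)) := by
  rw [← (finTwoPowSuccEquiv k).sum_comp, Fintype.sum_sum_type]

end finTwoPowSuccEquiv

local notation "ι₂" => finTwoPowSuccEquiv

lemma hadamard_succ_apply (k : ℕ) (p q : Fin (2 ^ k) ⊕ Fin (2 ^ k)) :
    hadamard (k + 1) (ι₂ k p) (ι₂ k q) =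
      (Real.sqrt 2)⁻¹ *
        Matrix.fromBlocks (hadamard k) (hadamard k) (hadamard k) (-hadamard k) p q := by
  simp [hadamard, finTwoPowSuccEquiv]

lemma hadamard_apply_zero_right (k : ℕ) (i : Fin (2 ^ k)) :
    hadamard k i 0 = (Real.sqrt 2)⁻¹ ^ k := by
  induction k with
  | zero => simp [hadamard]
  | succ k ih =>
    obtain ⟨p, rfl⟩ := (ι₂ k).surjective i
    have h0 : (0 : Fin (2 ^ (k + 1))) = ι₂ k (.inl 0) := Fin.ext (by simp)
    rcases p with p | p <;> simp [h0, hadamard_succ_apply, ih, pow_succ, mul_comm]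

section HadamardTransform

variable {E : Type*} [NormedAddCommGroup E] [InnerProductSpace ℝ E] {k : ℕ}

noncomputable def hadamardTransform (k : ℕ) (a : Fin (2 ^ k) → E) (i : Fin (2 ^ k)) : E :=
  ∑ j, hadamard k i j • a j

lemma hadamardTransform_zero (a : Fin (2 ^ 0) → E) (i : Fin (2 ^ 0)) :
    hadamardTransform 0 a i = a i := by
  obtain rfl : i = 0 := Fin.ext (Nat.lt_one_iff.mp i.isLt)
  simp [hadamardTransform, hadamard]

lemma hadamardTransform_succ_inl (a : Fin (2 ^ (k + 1)) → E) (i : Fin (2 ^ k)) :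
    hadamardTransform (k + 1) a (ι₂ k (.inl i)) = (Real.sqrt 2)⁻¹ •
      (hadamardTransform k (fun j => a (ι₂ k (.inl j))) i +
        hadamardTransform k (fun j => a (ι₂ k (.inr j))) i) := by
  simp [hadamardTransform, finTwoPowSuccEquiv.sum_eq (k := k), hadamard_succ_apply, mul_smul,
    smul_add, smul_sum]

lemma hadamardTransform_succ_inr (a : Fin (2 ^ (k + 1)) → E) (i : Fin (2 ^ k)) :
    hadamardTransform (k + 1) a (ι₂ k (.inr i)) = (Real.sqrt 2)⁻¹ •
      (hadamardTransform k (fun j => a (ι₂ k (.inl j))) i -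
        hadamardTransform k (fun j => a (ι₂ k (.inr j))) i) := by
  simp [hadamardTransform, finTwoPowSuccEquiv.sum_eq (k := k), hadamard_succ_apply, mul_smul,
    smul_sum, sub_eq_add_neg]

lemma hadamardTransform_of_eq_zero {d : Fin (2 ^ k) → E} (hd : ∀ j, j ≠ 0 → d j = 0)
    (i : Fin (2 ^ k)) : hadamardTransform k d i = (Real.sqrt 2)⁻¹ ^ k • d 0 := by
  rw [hadamardTransform, sum_eq_single 0 (fun j _ hj => by rw [hd j hj, smul_zero])
    (by simp), hadamard_apply_zero_right]

lemma sum_norm_sq_hadamardTransform (a : Fin (2 ^ k) → E) :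
    ∑ i, ‖hadamardTransform k a i‖ ^ 2 = ∑ j, ‖a j‖ ^ 2 := by
  induction k with
  | zero => simp [hadamardTransform_zero]
  | succ k ih =>
    have h2 : Real.sqrt 2 ^ 2 = 2 := Real.sq_sqrt zero_le_two
    rw [finTwoPowSuccEquiv.sum_eq, finTwoPowSuccEquiv.sum_eq (fun j => ‖a j‖ ^ 2),
      ← ih fun j => a (ι₂ k (.inl j)), ← ih fun j => a (ι₂ k (.inr j)),
      ← sum_add_distrib, ← sum_add_distrib]
    refine sum_congr rfl fun i _ => ?_
    rw [hadamardTransform_succ_inl, hadamardTransform_succ_inr, norm_inv_sqrt_two_smul,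
      norm_inv_sqrt_two_smul, div_pow, div_pow, h2, ← add_div,
      parallelogram_law_with_norm ℝ]
    ring

end HadamardTransform

def IsRademacherSupported {M : Type*} [Zero M] (k : ℕ) (a : Fin (2 ^ k) → M) : Prop :=
  ∀ i : Fin (2 ^ k), (¬ ∃ l < k, (i : ℕ) = 2 ^ l) → a i = 0

namespace IsRademacherSupported

variable {M : Type*} [Zero M] {k : ℕ} {a : Fin (2 ^ (k + 1)) → M}

lemma left (ha : IsRademacherSupported (k + 1) a) :
    IsRademacherSupported k fun j => a (ι₂ k (.inl j)) := by
  refine fun j hj => ha _ fun ⟨l, _, hl⟩ => hj ⟨l, ?_, by simpa using hl⟩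
  rw [← Nat.pow_lt_pow_iff_right one_lt_two]
  simp [← hl]

lemma right_eq_zero (ha : IsRademacherSupported (k + 1) a) {j : Fin (2 ^ k)} (hj : j ≠ 0) :
    a (ι₂ k (.inr j)) = 0 := by
  refine ha _ fun ⟨l, hl, hj'⟩ => hj (Fin.ext ?_)
  have : 2 ^ l ≤ 2 ^ k := Nat.pow_le_pow_right two_pos (Nat.lt_succ_iff.mp hl)
  simp only [finTwoPowSuccEquiv.val_inr] at hj'
  simp only [Fin.val_zero]
  omega

end IsRademacherSupported

section FourthMoment

variable {E : Type*} [NormedAddCommGroup E] [InnerProductSpace ℝ E]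

lemma sum_norm_pow_four_hadamardTransform_le {k : ℕ} {a : Fin (2 ^ k) → E}
    (ha : IsRademacherSupported k a) :
    ∑ i, ‖hadamardTransform k a i‖ ^ 4 ≤ 3 / 2 ^ k * (∑ j, ‖a j‖ ^ 2) ^ 2 := by
  induction k with
  | zero =>
    simp only [hadamardTransform_zero, pow_zero, div_one]
    calc ∑ i, ‖a i‖ ^ 4 = ∑ i, (‖a i‖ ^ 2) ^ 2 := by simp only [← pow_mul]
      _ ≤ (∑ i, ‖a i‖ ^ 2) ^ 2 := sum_sq_le_sq_sum_of_nonneg fun i _ => by positivity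
      _ ≤ 3 * (∑ i, ‖a i‖ ^ 2) ^ 2 := le_mul_of_one_le_left (by positivity) (by norm_num)
  | succ k ih =>
    set b : Fin (2 ^ k) → E := fun j => a (ι₂ k (.inl j))
    set d : Fin (2 ^ k) → E := fun j => a (ι₂ k (.inr j))
    set s := hadamardTransform k b
    set u := (Real.sqrt 2)⁻¹ ^ k • d 0
    have hd : ∀ i, hadamardTransform k (fun j => a (ι₂ k (.inr j))) i = u :=
      hadamardTransform_of_eq_zero fun j hj => ha.right_eq_zero hj
    have hu : ‖u‖ ^ 2 = ‖d 0‖ ^ 2 / 2 ^ k := by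
      rw [norm_smul, mul_pow, norm_pow, norm_inv, Real.norm_of_nonneg (Real.sqrt_nonneg 2),
        ← pow_mul, mul_comm k, pow_mul, inv_pow, Real.sq_sqrt zero_le_two, inv_pow, inv_mul_eq_div]
    have hd0 : ∑ j, ‖d j‖ ^ 2 = ‖d 0‖ ^ 2 :=
      sum_eq_single 0 (fun j _ hj => by simp [d, ha.right_eq_zero hj]) (by simp)
    have h4 : ∀ x : E, ‖(Real.sqrt 2)⁻¹ • x‖ ^ 4 = ‖x‖ ^ 4 / 4 := fun x => by
      have : Real.sqrt 2 ^ 4 = 4 := by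
        rw [show (4 : ℕ) = 2 * 2 from rfl, pow_mul, Real.sq_sqrt zero_le_two]
        norm_num
      rw [norm_inv_sqrt_two_smul, div_pow, this]
    have hS2 : ∑ i, ‖s i‖ ^ 2 = ∑ j, ‖b j‖ ^ 2 := sum_norm_sq_hadamardTransform b
    have hS4 : ∑ i, ‖s i‖ ^ 4 ≤ 3 / 2 ^ k * (∑ j, ‖b j‖ ^ 2) ^ 2 := ih ha.left
    calc ∑ i, ‖hadamardTransform (k + 1) a i‖ ^ 4
        = ∑ i, (‖s i + u‖ ^ 4 + ‖s i - u‖ ^ 4) / 4 := by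
          rw [finTwoPowSuccEquiv.sum_eq, ← sum_add_distrib]
          simp only [hadamardTransform_succ_inl, hadamardTransform_succ_inr, hd, h4, add_div]
          rfl
      _ ≤ ∑ i, (2 * ‖s i‖ ^ 4 + 12 * ‖s i‖ ^ 2 * ‖u‖ ^ 2 + 2 * ‖u‖ ^ 4) / 4 :=
          sum_le_sum fun i _ => div_le_div_of_nonneg_right
            (norm_add_pow_four_add_norm_sub_pow_four_le _ _) zero_le_four
      _ = (∑ i, ‖s i‖ ^ 4) / 2 + 3 * ‖u‖ ^ 2 * ∑ i, ‖s i‖ ^ 2 + 2 ^ k * (‖u‖ ^ 2) ^ 2 / 2 := by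
          simp only [← sum_div, sum_add_distrib, ← mul_sum, ← sum_mul, sum_const, card_univ,
            Fintype.card_fin, nsmul_eq_mul]
          push_cast
          ring
      _ ≤ 3 / 2 ^ (k + 1) * (∑ j, ‖b j‖ ^ 2 + ‖d 0‖ ^ 2) ^ 2 := by
          have hN : (0 : ℝ) < 2 ^ k := by positivity
          have hsplit : 3 / 2 ^ (k + 1) * (∑ j, ‖b j‖ ^ 2 + ‖d 0‖ ^ 2) ^ 2 =
              3 / 2 ^ k * (∑ j, ‖b j‖ ^ 2) ^ 2 / 2 + 3 * (‖d 0‖ ^ 2 / 2 ^ k) * ∑ j, ‖b j‖ ^ 2 +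
                2 ^ k * (‖d 0‖ ^ 2 / 2 ^ k) ^ 2 / 2 + (‖d 0‖ ^ 2) ^ 2 / 2 ^ k := by
            field_simp
            ring
          rw [hu, hS2, hsplit]
          have : 0 ≤ (‖d 0‖ ^ 2) ^ 2 / 2 ^ k := by positivity
          linarith
      _ = 3 / 2 ^ (k + 1) * (∑ j, ‖a j‖ ^ 2) ^ 2 := by
          rw [finTwoPowSuccEquiv.sum_eq fun j => ‖a j‖ ^ 2, ← hd0]

end FourthMoment

/-- Khintchine bound inside the Hadamard matrix: there is an absolute constant `B₁`
such that for every `k` and every vector `a ∈ ℂ^{2^k}` supported on the power-of-two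
indices (the Rademacher columns), `‖a‖₂ ≤ (B₁/√(2^k)) ‖H_{2^k} a‖₁`. -/
theorem stmt17 : ∃ B₁ > (0:ℝ), ∀ (k : ℕ) (a : Fin (2 ^ k) → ℂ),
    (∀ i : Fin (2 ^ k), (¬ ∃ l < k, (i : ℕ) = 2 ^ l) → a i = 0) →
    Real.sqrt (∑ i, ‖a i‖ ^ 2) ≤
      (B₁ / Real.sqrt (2 ^ k)) *
        ∑ i : Fin (2 ^ k), ‖∑ j : Fin (2 ^ k), ((hadamard k i j : ℝ) : ℂ) * a j‖ := by
  refine ⟨Real.sqrt 3, by positivity, fun k a ha => ?_⟩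
  have hT : ∀ i, ∑ j, ((hadamard k i j : ℝ) : ℂ) * a j = hadamardTransform k a i := fun i => by
    simp only [hadamardTransform, Complex.real_smul]
  have h4 := sum_norm_pow_four_hadamardTransform_le (a := a) ha
  simp only [hT, ← sum_norm_sq_hadamardTransform a] at h4 ⊢
  have h2 := sum_sq_le_of_sum_pow_four_le univ (by positivity) (fun i _ => norm_nonneg _) h4
  calc Real.sqrt (∑ i, ‖hadamardTransform k a i‖ ^ 2)
      ≤ Real.sqrt (3 / 2 ^ k * (∑ i, ‖hadamardTransform k a i‖) ^ 2) := Real.sqrt_le_sqrt h2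
    _ = Real.sqrt 3 / Real.sqrt (2 ^ k) * ∑ i, ‖hadamardTransform k a i‖ := by
      rw [Real.sqrt_mul (by positivity), Real.sqrt_sq (sum_nonneg fun i _ => norm_nonneg _),
        Real.sqrt_div' 3 (by positivity)]
end
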